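/- Let V be a complex inner product space of finite complex dimension n ≥ 2 and R a Kähler curvature form on V with positive orthogonal bisectional curvature. Then for any orthonormal basis e_1, …, e_n of V the sum of holomorphic sectional curvatures is positive: Σ_{α=1}^{n} Re R(e_α, e_α, e_α, e_α) > 0. -/

import Mathlib

/-- A Kähler curvature form on a complex inner product space `V`: a map
`R : V → V → V → V → ℂ` that is complex-linear in the first and third
arguments, conjugate-linear in the second and fourth arguments, and satisfies
the Kähler symmetries. -/
structure KahlerCurvatureForm (V : Type*) [NormedAddCommGroup V]
    [InnerProductSpace ℂ V] where
  R : V → V → V → V → ℂ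
  add_fst : ∀ x x' y z w, R (x + x') y z w = R x y z w + R x' y z w
  smul_fst : ∀ (c : ℂ) x y z w, R (c • x) y z w = c * R x y z w
  add_snd : ∀ x y y' z w, R x (y + y') z w = R x y z w + R x y' z w
  smul_snd : ∀ (c : ℂ) x y z w, R x (c • y) z w = (starRingEnd ℂ) c * R x y z w
  add_trd : ∀ x y z z' w, R x y (z + z') w = R x y z w + R x y z' w
  smul_trd : ∀ (c : ℂ) x y z w, R x y (c • z) w = c * R x y z w
  add_fth : ∀ x y z w w', R x y z (w + w') = R x y z w + R x y z w'
  smul_fth : ∀ (c : ℂ) x y z w, R x y z (c • w) = (starRingEnd ℂ) c * R x y z w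
  sym_fst_trd : ∀ x y z w, R x y z w = R z y x w
  sym_snd_fth : ∀ x y z w, R x y z w = R x w z y
  conj_sym : ∀ x y z w, R x y z w = (starRingEnd ℂ) (R y x w z)

/-- `R` has positive orthogonal bisectional curvature if `Re R(x,x,y,y) > 0`
for all nonzero orthogonal vectors `x, y`. -/
def KahlerCurvatureForm.PosOrthBisectional {V : Type*} [NormedAddCommGroup V]
    [InnerProductSpace ℂ V] (R : KahlerCurvatureForm V) : Prop :=
  ∀ x y : V, x ≠ 0 → y ≠ 0 → inner ℂ x y = (0 : ℂ) → 0 < (R.R x x y y).re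

/-!
Pairing `e α` with `e (α + 1)` (indices mod `n`), it suffices that
`Re R(x,x,x,x) + Re R(y,y,y,y) > 0` for orthonormal `x, y`: summing over `α` counts every
holomorphic sectional curvature twice. For such `x, y` the pairs `x ± y` and `x ± i y` are
nonzero and orthogonal, and by polarization the two bisectional curvatures
`R(x+y, x+y, x-y, x-y)` and `R(x+iy, x+iy, x-iy, x-iy)` add up to `2 R(x,x,x,x) + 2 R(y,y,y,y)`.
-/

open scoped InnerProductSpace

section InnerProduct

variable {V : Type*} [NormedAddCommGroup V] [InnerProductSpace ℂ V]

lemma add_ne_zero_of_inner_eq_zero {x y : V} (hx : x ≠ 0) (hxy : ⟪x, y⟫_ℂ = 0) :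
    x + y ≠ 0 := by
  intro h
  have : ⟪x, x + y⟫_ℂ = 0 := by rw [h, inner_zero_right]
  rw [inner_add_right, hxy, add_zero, inner_self_eq_zero] at this
  exact hx this

lemma inner_add_smul_sub_smul_eq_zero {x y : V} (hxy : ⟪x, y⟫_ℂ = 0) (hnorm : ‖x‖ = ‖y‖)
    {c : ℂ} (hc : ‖c‖ = 1) : ⟪x + c • y, x - c • y⟫_ℂ = 0 := by
  have hyx : ⟪y, x⟫_ℂ = 0 := inner_eq_zero_symm.mp hxy
  simp only [inner_add_left, inner_sub_right, inner_smul_left, inner_smul_right, hxy, hyx,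
    inner_self_eq_norm_sq_to_K, hnorm, mul_zero, add_zero, zero_add]
  rw [← mul_assoc, Complex.mul_conj', hc]
  simp

end InnerProduct

lemma Finset.sum_pos_of_forall_add_comp_perm_pos {ι : Type*} [Fintype ι] [Nonempty ι]
    (σ : Equiv.Perm ι) {f : ι → ℝ} (h : ∀ i, 0 < f i + f (σ i)) : 0 < ∑ i, f i := by
  have hpairs : 0 < ∑ i, (f i + f (σ i)) := Finset.sum_pos (fun i _ => h i) Finset.univ_nonempty
  rw [Finset.sum_add_distrib, Equiv.sum_comp] at hpairs
  linarith

namespace KahlerCurvatureForm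

variable {V : Type*} [NormedAddCommGroup V] [InnerProductSpace ℂ V] (R : KahlerCurvatureForm V)

lemma polarization_add_sub (x y : V) :
    R.R (x + y) (x + y) (x - y) (x - y)
      + R.R (x + Complex.I • y) (x + Complex.I • y) (x - Complex.I • y) (x - Complex.I • y)
      = 2 * R.R x x x x + 2 * R.R y y y y := by
  simp only [sub_eq_add_neg, ← neg_smul, ← neg_one_smul ℂ y, R.add_fst, R.add_snd, R.add_trd,
    R.add_fth, R.smul_fst, R.smul_snd, R.smul_trd, R.smul_fth, map_neg, map_one,
    Complex.conj_I]
  rw [R.sym_snd_fth x y x x, R.sym_fst_trd y x x x, R.sym_fst_trd x y y y,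
    R.sym_snd_fth y x y y, R.sym_fst_trd x y y x, R.sym_fst_trd y x x y]
  ring_nf
  simp only [Complex.I_pow_four, Complex.I_sq]
  ring

variable {R}

lemma PosOrthBisectional.re_add_re_pos (hR : R.PosOrthBisectional) {x y : V} (hx : x ≠ 0)
    (hxy : ⟪x, y⟫_ℂ = 0) (hnorm : ‖x‖ = ‖y‖) :
    0 < (R.R x x x x).re + (R.R y y y y).re := by
  have hpos : ∀ c : ℂ, ‖c‖ = 1 →
      0 < (R.R (x + c • y) (x + c • y) (x - c • y) (x - c • y)).re := by
    intro c hc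
    have hxcy : ⟪x, c • y⟫_ℂ = 0 := by rw [inner_smul_right, hxy, mul_zero]
    have hxncy : ⟪x, -(c • y)⟫_ℂ = 0 := by rw [inner_neg_right, hxcy, neg_zero]
    refine hR _ _ (add_ne_zero_of_inner_eq_zero hx hxcy) ?_
      (inner_add_smul_sub_smul_eq_zero hxy hnorm hc)
    rw [sub_eq_add_neg]
    exact add_ne_zero_of_inner_eq_zero hx hxncy
  have hreal := hpos 1 norm_one
  have himag := hpos Complex.I Complex.norm_I
  rw [one_smul] at hreal
  have hsum := congrArg Complex.re (R.polarization_add_sub x y)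
  simp only [Complex.add_re, Complex.mul_re, Complex.re_ofNat, Complex.im_ofNat, zero_mul,
    sub_zero] at hsum
  linarith

end KahlerCurvatureForm

theorem stmt3 {V : Type*} [NormedAddCommGroup V] [InnerProductSpace ℂ V]
    {n : ℕ} (hn : 2 ≤ n)
    (R : KahlerCurvatureForm V) (hR : R.PosOrthBisectional)
    (e : OrthonormalBasis (Fin n) ℂ V) :
    0 < ∑ α : Fin n, (R.R (e α) (e α) (e α) (e α)).re := by
  have : Nonempty (Fin n) := ⟨⟨0, by omega⟩⟩
  refine Finset.sum_pos_of_forall_add_comp_perm_pos (finRotate n) fun α => ?_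
  have hα : finRotate n α ≠ α := by
    rw [← Equiv.Perm.mem_support, support_finRotate_of_le hn]
    exact Finset.mem_univ α
  exact hR.re_add_re_pos (e.orthonormal.ne_zero α) (e.orthonormal.2 hα.symm)
    (by rw [e.orthonormal.1, e.orthonormal.1])
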